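/- arXiv:2304.05790 — 2 statements merged into one kernel-verified Lean document; each statement's English description precedes it below -/
import Mathlib

section
/- Lemma 3.8 (approximation of the extended product function on [−1,1]^d): There exists a constant K ∈ ℕ which satisfies for all d ∈ ℕ, p ∈ [1,∞], ε ∈ (0,1] that Cost_p(𝔭_d|_{[−1,1]^d}, √32·d^{7/2}, ε) ≤ K·d^K·ε^{−1}. -/
/-!
On `[0, 3]` the square is replaced by its piecewise linear interpolant with step `h = 3 / m`,
a sum of `m` ReLUs whose error `t ↦ sqInterp t - t ^ 2` is `h`-Lipschitz and vanishes at `0`.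
Polarization turns it into an approximate multiplication on `[-2, 2] × [-1, 1]` with error
`2 h` whose Lipschitz constants exceed those of `(a, b) ↦ a b` only by `h / 2`. Iterating,
`Y 0 = x 0`, `Y (t + 1) ≈ Y t * x (t + 1)`, the errors add up to `2 t h` while the Lipschitz
constant (in the sup norm) grows only linearly, to `1 + 3 t`, as long as `2 t h ≤ 1`.
A ReLU network with `2 d` layers of widths alternating between `2 d` and `2 d + 4 m` computes
`(Y 0, …, Y (d - 1))`, carrying values along through `y = max y 0 - max (-y) 0`.
With `m = 6 d² ⌈ε⁻¹⌉` this gives accuracy `ε`, Lipschitz constant `3 d²` and `O(d⁴ ε⁻¹)`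
parameters.
-/

open scoped BigOperators ENNReal

noncomputable section

/-- A ReLU deep neural network with `L + 1` affine layers (so depth at least one),
layer dimensions `ℓ 0, ℓ 1, …, ℓ (L + 1)`, weight matrices `W k` and bias vectors `b k`
(values of `ℓ`, `W`, `b` beyond layer index `L` are irrelevant for the realization
and for the number of parameters). -/
structure DNN where
  L : ℕ
  ℓ : ℕ → ℕ
  W : (k : ℕ) → Matrix (Fin (ℓ (k + 1))) (Fin (ℓ k)) ℝ
  b : (k : ℕ) → Fin (ℓ (k + 1)) → ℝ

namespace DNN

/-- The number of parameters `P(Φ) = ∑_{k=1}^{L} ℓ_k (ℓ_{k-1} + 1)` of a DNN. -/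
def params (Φ : DNN) : ℕ :=
  ∑ k ∈ Finset.range (Φ.L + 1), Φ.ℓ (k + 1) * (Φ.ℓ k + 1)

/-- The `k`-th affine layer function `x ↦ W_k x + b_k`. -/
def affine (Φ : DNN) (k : ℕ) (x : Fin (Φ.ℓ k) → ℝ) : Fin (Φ.ℓ (k + 1)) → ℝ :=
  fun i => (∑ j, Φ.W k i j * x j) + Φ.b k i

/-- The value after `k` affine layers, each followed by the ReLU activation. -/
def hidden (Φ : DNN) : (k : ℕ) → (Fin (Φ.ℓ 0) → ℝ) → (Fin (Φ.ℓ k) → ℝ)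
  | 0 => id
  | k + 1 => fun x i => max (affine Φ k (hidden Φ k x) i) 0

/-- The realization `R(Φ)`: all affine layers with ReLU in between (no activation after
the last affine layer). -/
def realize (Φ : DNN) (x : Fin (Φ.ℓ 0) → ℝ) : Fin (Φ.ℓ (Φ.L + 1)) → ℝ :=
  affine Φ Φ.L (hidden Φ Φ.L x)

/-- `Φ.Realizes f` means that the realization of `Φ` is the function `f : ℝ^m → ℝ^n`
(in particular the input and output dimensions of `Φ` are `m` and `n`). -/
def Realizes (Φ : DNN) {m n : ℕ} (f : (Fin m → ℝ) → (Fin n → ℝ)) : Prop :=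
  ∃ (hm : Φ.ℓ 0 = m) (hn : Φ.ℓ (Φ.L + 1) = n),
    ∀ (x : Fin m → ℝ) (i : Fin n),
      f x i = realize Φ (fun j => x (Fin.cast hm j)) (Fin.cast hn.symm i)

end DNN

/-- The `ℓ^p`-norm on `ℝ^k` for `p ∈ [1,∞]`. -/
def lpNorm (p : ℝ≥0∞) {k : ℕ} (x : Fin k → ℝ) : ℝ :=
  if p = ∞ then ⨆ i, |x i| else (∑ i, |x i| ^ p.toReal) ^ (1 / p.toReal)

/-- The hypercube `[a,b]^d ⊆ ℝ^d`. -/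
def cube (d : ℕ) (a b : ℝ) : Set (Fin d → ℝ) :=
  Set.Icc (fun _ => a) (fun _ => b)

/-- `Cost p D f L ε`: the minimal number of parameters of a DNN whose realization
approximates `f` on `D` up to `ε` in the `ℓ^p`-norm and is `L`-Lipschitz on `D`
with respect to the `ℓ^p`-norm; `∞` if no such DNN exists. -/
def Cost (p : ℝ≥0∞) {m n : ℕ} (D : Set (Fin m → ℝ))
    (f : (Fin m → ℝ) → (Fin n → ℝ)) (L ε : ℝ) : ℝ≥0∞ :=
  sInf { N : ℝ≥0∞ | ∃ Φ : DNN, ∃ g : (Fin m → ℝ) → (Fin n → ℝ),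
    Φ.Realizes g ∧ N = (Φ.params : ℝ≥0∞) ∧
    (∀ x ∈ D, lpNorm p (g x - f x) ≤ ε) ∧
    (∀ x ∈ D, ∀ y ∈ D, lpNorm p (g x - g y) ≤ L * lpNorm p (x - y)) }

/-- Given block sizes `d : Fin n → ℕ`, the index in `Fin (∑ j, d j)` of the `l`-th
coordinate of the `i`-th block (blocks are arranged consecutively). -/
def blockIdx {n : ℕ} (d : Fin n → ℕ) (i : Fin n) (l : Fin (d i)) : Fin (∑ j, d j) :=
  ⟨(∑ j ∈ Finset.univ.filter (fun j => j < i), d j) + l.1, by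
    have h1 : l.1 < d i := l.2
    have h2 : (∑ j ∈ Finset.univ.filter (fun j => j < i), d j) + d i ≤ ∑ j, d j := by
      have hsplit := Finset.sum_filter_add_sum_filter_not Finset.univ (fun j => j < i) d
      have h3 : d i ≤ ∑ j ∈ Finset.univ.filter (fun j => ¬ j < i), d j :=
        Finset.single_le_sum (fun _ _ => Nat.zero_le _) (by simp)
      omega
    omega⟩

/-- The class `𝒫_{k,p}([a,b]^d, L)`: parallelizations `f = f_1 □ ⋯ □ f_m` of real-valued
functions `f_i` of at most `k` variables that are `L`-Lipschitz w.r.t. the `ℓ^p`-norm. -/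
def MemPLip (k : ℕ) (p : ℝ≥0∞) (a b L : ℝ) {d m : ℕ}
    (f : (Fin d → ℝ) → (Fin m → ℝ)) : Prop :=
  ∃ (dims : Fin m → ℕ) (hd : ∑ i, dims i = d) (g : ∀ i, (Fin (dims i) → ℝ) → ℝ),
    (∀ i, 0 < dims i) ∧ (∀ i, dims i ≤ k) ∧
    (∀ i, ∀ x ∈ cube (dims i) a b, ∀ y ∈ cube (dims i) a b,
      |g i x - g i y| ≤ L * lpNorm p (x - y)) ∧
    (∀ x ∈ cube d a b, ∀ i : Fin m,
      f x i = g i (fun l => x (Fin.cast hd (blockIdx dims i l))))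

/-- The class `M([a,b]^d)`: parallelizations of maximum functions `m_{d_1} □ ⋯ □ m_{d_m}`. -/
def MemMaxClass (a b : ℝ) {d m : ℕ} (f : (Fin d → ℝ) → (Fin m → ℝ)) : Prop :=
  ∃ (dims : Fin m → ℕ) (hd : ∑ i, dims i = d),
    (∀ i, 0 < dims i) ∧
    (∀ x ∈ cube d a b, ∀ i : Fin m,
      f x i = ⨆ l : Fin (dims i), x (Fin.cast hd (blockIdx dims i l)))

/-- The class `P([a,b]^d)`: parallelizations of product functions `p_{d_1} □ ⋯ □ p_{d_m}`. -/
def MemProdClass (a b : ℝ) {d m : ℕ} (f : (Fin d → ℝ) → (Fin m → ℝ)) : Prop :=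
  ∃ (dims : Fin m → ℕ) (hd : ∑ i, dims i = d),
    (∀ i, 0 < dims i) ∧
    (∀ x ∈ cube d a b, ∀ i : Fin m,
      f x i = ∏ l : Fin (dims i), x (Fin.cast hd (blockIdx dims i l)))

/-- `f` coincides on `[a,b]^d` with the extended maximum function
`𝔪_d(x) = (max{x_1}, max{x_1,x_2}, …, max{x_1,…,x_d})`. -/
def IsExtMaxOn (a b : ℝ) {d m : ℕ} (f : (Fin d → ℝ) → (Fin m → ℝ)) : Prop :=
  ∃ h : d = m, ∀ x ∈ cube d a b, ∀ i : Fin m,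
    f x i = (Finset.Iic (Fin.cast h.symm i)).sup' Finset.nonempty_Iic x

/-- `f` coincides on `[a,b]^d` with the extended product function
`𝔭_d(x) = (x_1, x_1 x_2, …, x_1 ⋯ x_d)`. -/
def IsExtProdOn (a b : ℝ) {d m : ℕ} (f : (Fin d → ℝ) → (Fin m → ℝ)) : Prop :=
  ∃ h : d = m, ∀ x ∈ cube d a b, ∀ i : Fin m,
    f x i = ∏ j ∈ Finset.Iic (Fin.cast h.symm i), x j

/-- Iterated composition: `compSeq dims f k = f_{k-1} ∘ ⋯ ∘ f_1 ∘ f_0`. -/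
def compSeq (dims : ℕ → ℕ) (f : ∀ i : ℕ, (Fin (dims i) → ℝ) → (Fin (dims (i + 1)) → ℝ)) :
    (k : ℕ) → (Fin (dims 0) → ℝ) → (Fin (dims k) → ℝ)
  | 0 => id
  | k + 1 => fun x => f k (compSeq dims f k x)

open Finset

lemma abs_le_lpNorm {p : ℝ≥0∞} (hp : 1 ≤ p) {k : ℕ} (x : Fin k → ℝ) (i : Fin k) :
    |x i| ≤ lpNorm p x := by
  unfold lpNorm
  split_ifs with hinf
  · exact le_ciSup (Finite.bddAbove_range fun j => |x j|) i
  · have hq : 0 < p.toReal := ENNReal.toReal_pos (by positivity) hinf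
    calc |x i| = (|x i| ^ p.toReal) ^ (1 / p.toReal) := by
          rw [← Real.rpow_mul (abs_nonneg _), mul_one_div_cancel hq.ne', Real.rpow_one]
      _ ≤ (∑ j, |x j| ^ p.toReal) ^ (1 / p.toReal) := by
          gcongr
          exact single_le_sum (f := fun j => |x j| ^ p.toReal)
            (fun j _ => by positivity) (mem_univ i)

lemma lpNorm_nonneg (p : ℝ≥0∞) {k : ℕ} (x : Fin k → ℝ) : 0 ≤ lpNorm p x := by
  unfold lpNorm
  split_ifs
  · exact Real.iSup_nonneg fun i => abs_nonneg _
  · positivity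

lemma lpNorm_le_card_mul {p : ℝ≥0∞} (hp : 1 ≤ p) {k : ℕ} (hk : 0 < k) (x : Fin k → ℝ)
    {C : ℝ} (h : ∀ i, |x i| ≤ C) : lpNorm p x ≤ k * C := by
  have hC : 0 ≤ C := (abs_nonneg _).trans (h ⟨0, hk⟩)
  have hk1 : (1 : ℝ) ≤ k := by exact_mod_cast hk
  unfold lpNorm
  split_ifs with hinf
  · exact (Real.iSup_le h hC).trans (le_mul_of_one_le_left hC hk1)
  · have hq : 1 ≤ p.toReal := by simpa using ENNReal.toReal_mono hinf hp
    calc (∑ i, |x i| ^ p.toReal) ^ (1 / p.toReal)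
        ≤ (k * C ^ p.toReal) ^ (1 / p.toReal) := by
          gcongr
          calc ∑ i, |x i| ^ p.toReal ≤ ∑ _i : Fin k, C ^ p.toReal := by gcongr with i; exact h i
            _ = k * C ^ p.toReal := by simp
      _ = (k : ℝ) ^ (1 / p.toReal) * C := by
          rw [Real.mul_rpow (by positivity) (by positivity), ← Real.rpow_mul hC,
            mul_one_div_cancel (by linarith), Real.rpow_one]
      _ ≤ k * C := by
          gcongr
          exact Real.rpow_le_self_of_one_le hk1 (by rw [div_le_one] <;> linarith)

namespace DNN

def ofFun (L : ℕ) (ℓ : ℕ → ℕ) (W : ℕ → ℕ → ℕ → ℝ) (b : ℕ → ℕ → ℝ) : DNN where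
  L := L
  ℓ := ℓ
  W k := Matrix.of fun i j => W k i j
  b k i := b k i

variable {L : ℕ} {ℓ : ℕ → ℕ} {W : ℕ → ℕ → ℕ → ℝ} {b : ℕ → ℕ → ℝ}

lemma affine_ofFun {k : ℕ} {v : Fin (ℓ k) → ℝ} {g : ℕ → ℝ} (hv : ∀ j, v j = g j)
    (i : Fin (ℓ (k + 1))) :
    (ofFun L ℓ W b).affine k v i = ∑ j ∈ range (ℓ k), W k i j * g j + b k i := by
  change ∑ j : Fin (ℓ k), W k i j * v j + b k i = _
  simp only [hv]
  rw [Fin.sum_univ_eq_sum_range (fun j => W k i j * g j)]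

lemma hidden_succ_ofFun {x : Fin (ℓ 0) → ℝ} {k : ℕ} {g : ℕ → ℝ}
    (hg : ∀ j, (ofFun L ℓ W b).hidden k x j = g j) (i : Fin (ℓ (k + 1))) :
    (ofFun L ℓ W b).hidden (k + 1) x i = max (∑ j ∈ range (ℓ k), W k i j * g j + b k i) 0 :=
  congrArg (max · 0) (affine_ofFun hg i)

lemma realize_ofFun {x : Fin (ℓ 0) → ℝ} {g : ℕ → ℝ}
    (hg : ∀ j, (ofFun L ℓ W b).hidden L x j = g j) (i : Fin (ℓ (L + 1))) :
    (ofFun L ℓ W b).realize x i = ∑ j ∈ range (ℓ L), W L i j * g j + b L i :=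
  affine_ofFun hg i

end DNN

lemma cost_le_params {p : ℝ≥0∞} {m n : ℕ} {D : Set (Fin m → ℝ)}
    {f g : (Fin m → ℝ) → (Fin n → ℝ)} {L ε : ℝ} {Φ : DNN} (hΦ : Φ.Realizes g)
    (herr : ∀ x ∈ D, lpNorm p (g x - f x) ≤ ε)
    (hlip : ∀ x ∈ D, ∀ y ∈ D, lpNorm p (g x - g y) ≤ L * lpNorm p (x - y)) :
    Cost p D f L ε ≤ Φ.params :=
  sInf_le ⟨Φ, g, hΦ, rfl, herr, hlip⟩

section SquareInterpolation

variable {m : ℕ} {h : ℝ}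

def sqCoeff (h : ℝ) (k : ℕ) : ℝ := if k = 0 then h else 2 * h

/-- On `[0, m h]`, the piecewise linear interpolant of `t ↦ t ^ 2` at the nodes `k h`: its slope
is `h` on `[0, h]` and grows by `2 h` at each further node. -/
def sqInterp (m : ℕ) (h t : ℝ) : ℝ := ∑ k ∈ range m, sqCoeff h k * max (t - k * h) 0

lemma sum_sqCoeff_mul (h t : ℝ) (j : ℕ) :
    ∑ k ∈ range (j + 1), sqCoeff h k * (t - k * h) = (2 * j + 1) * h * t - j * (j + 1) * h ^ 2 := by
  induction j with
  | zero => simp [sqCoeff]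
  | succ j ih => rw [sum_range_succ, ih, sqCoeff, if_neg j.succ_ne_zero]; push_cast; ring

lemma sqInterp_eq_of_mem_Icc (hh : 0 ≤ h) {j : ℕ} (hj : j < m) {t : ℝ}
    (ht : t ∈ Set.Icc (j * h) ((j + 1) * h)) :
    sqInterp m h t = (2 * j + 1) * h * t - j * (j + 1) * h ^ 2 := by
  rw [← sum_sqCoeff_mul, sqInterp, ← sum_subset (range_subset_range.2 hj)]
  · refine sum_congr rfl fun k hk => ?_
    have : (k : ℝ) ≤ j := by exact_mod_cast Nat.lt_succ_iff.1 (mem_range.1 hk)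
    rw [max_eq_left (by nlinarith [ht.1])]
  · intro k _ hk
    have : (j : ℝ) + 1 ≤ k := by exact_mod_cast not_lt.1 (mt mem_range.2 hk)
    rw [max_eq_right (by nlinarith [ht.2]), mul_zero]

lemma sqInterp_zero (m : ℕ) (hh : 0 ≤ h) : sqInterp m h 0 = 0 :=
  sum_eq_zero fun k _ => by rw [max_eq_right (by nlinarith [k.cast_nonneg (α := ℝ)]), mul_zero]

lemma abs_sqInterp_sub_sq_sub_le_of_mem_Icc (hh : 0 ≤ h) {j : ℕ} (hj : j < m) {t t' : ℝ}
    (ht : t ∈ Set.Icc (j * h) ((j + 1) * h)) (ht' : t' ∈ Set.Icc (j * h) ((j + 1) * h)) :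
    |(sqInterp m h t - t ^ 2) - (sqInterp m h t' - t' ^ 2)| ≤ h * |t - t'| := by
  rw [sqInterp_eq_of_mem_Icc hh hj ht, sqInterp_eq_of_mem_Icc hh hj ht',
    show (2 * j + 1) * h * t - j * (j + 1) * h ^ 2 - t ^ 2
        - ((2 * j + 1) * h * t' - j * (j + 1) * h ^ 2 - t' ^ 2)
      = ((2 * j + 1) * h - (t + t')) * (t - t') by ring, abs_mul]
  gcongr
  rw [abs_le]; constructor <;> nlinarith [ht.1, ht.2, ht'.1, ht'.2]

lemma abs_sqInterp_sub_sq_sub_le_of_le (hh : 0 ≤ h) {n : ℕ} (hn : n ≤ m) {t t' : ℝ}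
    (ht' : 0 ≤ t') (htt' : t' ≤ t) (ht : t ≤ n * h) :
    |(sqInterp m h t - t ^ 2) - (sqInterp m h t' - t' ^ 2)| ≤ h * (t - t') := by
  induction n generalizing t t' with
  | zero =>
    obtain rfl : t = t' := by simp at ht; linarith
    simp
  | succ n ih =>
    rcases le_or_gt t (n * h) with htn | htn
    · exact ih (by omega) ht' htt' htn
    have last_piece : ∀ s ∈ Set.Icc (n * h) t,
        |(sqInterp m h t - t ^ 2) - (sqInterp m h s - s ^ 2)| ≤ h * (t - s) := fun s hs => by
      have ht : t ∈ Set.Icc (n * h) ((n + 1) * h) := ⟨htn.le, by exact_mod_cast ht⟩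
      rw [← abs_of_nonneg (sub_nonneg.2 hs.2)]
      exact abs_sqInterp_sub_sq_sub_le_of_mem_Icc hh (by omega) ht ⟨hs.1, hs.2.trans ht.2⟩
    rcases le_or_gt (n * h) t' with htn' | htn'
    · exact last_piece t' ⟨htn', htt'⟩
    calc _ ≤ |(sqInterp m h t - t ^ 2) - (sqInterp m h (n * h) - (n * h) ^ 2)|
          + |(sqInterp m h (n * h) - (n * h) ^ 2) - (sqInterp m h t' - t' ^ 2)| := abs_sub_le _ _ _
      _ ≤ h * (t - n * h) + h * (n * h - t') :=
          add_le_add (last_piece _ ⟨le_rfl, htn.le⟩) (ih (by omega) ht' htn'.le le_rfl)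
      _ = h * (t - t') := by ring

lemma abs_sqInterp_sub_sq_sub_le (hh : 0 ≤ h) {t t' : ℝ} (ht : t ∈ Set.Icc 0 (m * h))
    (ht' : t' ∈ Set.Icc 0 (m * h)) :
    |(sqInterp m h t - t ^ 2) - (sqInterp m h t' - t' ^ 2)| ≤ h * |t - t'| := by
  rcases le_total t' t with htt' | htt'
  · rw [abs_of_nonneg (sub_nonneg.2 htt')]
    exact abs_sqInterp_sub_sq_sub_le_of_le hh le_rfl ht'.1 htt' ht.2
  · rw [abs_sub_comm, abs_sub_comm t, abs_of_nonneg (sub_nonneg.2 htt')]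
    exact abs_sqInterp_sub_sq_sub_le_of_le hh le_rfl ht.1 htt' ht'.2

lemma abs_sqInterp_sub_sq_le (hh : 0 ≤ h) {t : ℝ} (ht : t ∈ Set.Icc 0 (m * h)) :
    |sqInterp m h t - t ^ 2| ≤ h * t := by
  have h0 : (0 : ℝ) ∈ Set.Icc 0 (m * h) := ⟨le_rfl, by positivity⟩
  simpa [sqInterp_zero m hh, abs_of_nonneg ht.1] using abs_sqInterp_sub_sq_sub_le hh ht h0

end SquareInterpolation

section ApproxProduct

variable {m : ℕ} {h : ℝ}

/-- Polarization `a b = ((a + b) ^ 2 - (a - b) ^ 2) / 4` with `sqInterp` in place of the square. -/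
def approxMul (m : ℕ) (h a b : ℝ) : ℝ := (sqInterp m h |a + b| - sqInterp m h |a - b|) / 4

lemma nonneg_of_three_le_mul (hmh : 3 ≤ m * h) : 0 ≤ h :=
  (pos_of_mul_pos_right (by linarith) m.cast_nonneg).le

lemma approxMul_sub_mul (m : ℕ) (h a b : ℝ) :
    approxMul m h a b - a * b
      = ((sqInterp m h |a + b| - |a + b| ^ 2) - (sqInterp m h |a - b| - |a - b| ^ 2)) / 4 := by
  rw [approxMul, sq_abs, sq_abs]; ring

lemma abs_add_and_abs_sub_mem_Icc (hmh : 3 ≤ m * h) {a b : ℝ} (ha : |a| ≤ 2) (hb : |b| ≤ 1) :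
    |a + b| ∈ Set.Icc 0 (m * h) ∧ |a - b| ∈ Set.Icc 0 (m * h) :=
  ⟨⟨abs_nonneg _, by linarith [abs_add_le a b]⟩, ⟨abs_nonneg _, by linarith [abs_sub a b]⟩⟩

lemma abs_approxMul_sub_mul_le (hmh : 3 ≤ m * h) {a b : ℝ} (ha : |a| ≤ 2) (hb : |b| ≤ 1) :
    |approxMul m h a b - a * b| ≤ 2 * h := by
  have hh := nonneg_of_three_le_mul hmh
  obtain ⟨hplus, hminus⟩ := abs_add_and_abs_sub_mem_Icc hmh ha hb
  have e₁ := abs_sqInterp_sub_sq_le hh hplus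
  have e₂ := abs_sqInterp_sub_sq_le hh hminus
  rw [approxMul_sub_mul, abs_div, abs_of_pos (four_pos : (0 : ℝ) < 4), div_le_iff₀ four_pos]
  calc _ ≤ h * |a + b| + h * |a - b| := (abs_sub _ _).trans (add_le_add e₁ e₂)
    _ ≤ h * 3 + h * 3 := by gcongr <;> linarith [abs_add_le a b, abs_sub a b]
    _ ≤ 2 * h * 4 := by linarith

lemma abs_approxMul_sub_approxMul_le (hmh : 3 ≤ m * h) {a b a' b' : ℝ}
    (ha : |a| ≤ 2) (hb : |b| ≤ 1) (ha' : |a'| ≤ 2) (hb' : |b'| ≤ 1) :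
    |approxMul m h a b - approxMul m h a' b'|
      ≤ (1 + h / 2) * |a - a'| + (2 + h / 2) * |b - b'| := by
  have hh := nonneg_of_three_le_mul hmh
  obtain ⟨hplus, hminus⟩ := abs_add_and_abs_sub_mem_Icc hmh ha hb
  obtain ⟨hplus', hminus'⟩ := abs_add_and_abs_sub_mem_Icc hmh ha' hb'
  have e₁ := (abs_sqInterp_sub_sq_sub_le hh hplus hplus').trans
    (mul_le_mul_of_nonneg_left (abs_abs_sub_abs_le_abs_sub _ _) hh)
  have e₂ := (abs_sqInterp_sub_sq_sub_le hh hminus hminus').trans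
    (mul_le_mul_of_nonneg_left (abs_abs_sub_abs_le_abs_sub _ _) hh)
  have hsum : |a + b - (a' + b')| ≤ |a - a'| + |b - b'| := by
    rw [add_sub_add_comm]; exact abs_add_le _ _
  have hdiff : |a - b - (a' - b')| ≤ |a - a'| + |b - b'| := by
    rw [sub_sub_sub_comm]; exact abs_sub _ _
  have hprod : |a * b - a' * b'| ≤ |a - a'| + 2 * |b - b'| := by
    rw [show a * b - a' * b' = (a - a') * b + a' * (b - b') by ring]
    refine (abs_add_le _ _).trans ?_
    rw [abs_mul, abs_mul]
    gcongr
    · exact mul_le_of_le_one_right (abs_nonneg _) hb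
  have key : approxMul m h a b - approxMul m h a' b' = (a * b - a' * b')
      + ((sqInterp m h |a + b| - |a + b| ^ 2) - (sqInterp m h |a' + b'| - |a' + b'| ^ 2)) / 4
      - ((sqInterp m h |a - b| - |a - b| ^ 2) - (sqInterp m h |a' - b'| - |a' - b'| ^ 2)) / 4 := by
    linarith [approxMul_sub_mul m h a b, approxMul_sub_mul m h a' b']
  rw [key]
  refine (abs_sub _ _).trans ((add_le_add (abs_add_le _ _) le_rfl).trans ?_)
  rw [abs_div, abs_div, abs_of_pos (four_pos : (0 : ℝ) < 4)]
  nlinarith [abs_nonneg (a - a'), abs_nonneg (b - b')]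

def approxProd (m : ℕ) (h : ℝ) (x : ℕ → ℝ) : ℕ → ℝ
  | 0 => x 0
  | t + 1 => approxMul m h (approxProd m h x t) (x (t + 1))

variable {x x' : ℕ → ℝ}

lemma abs_prod_le_one (hx : ∀ j, |x j| ≤ 1) (s : Finset ℕ) : |∏ k ∈ s, x k| ≤ 1 := by
  rw [abs_prod]
  exact prod_le_one (fun _ _ => abs_nonneg _) fun k _ => hx k

lemma abs_approxProd_sub_prod_le (hmh : 3 ≤ m * h) (hx : ∀ j, |x j| ≤ 1) :
    ∀ t : ℕ, 2 * t * h ≤ 1 → |approxProd m h x t - ∏ k ∈ range (t + 1), x k| ≤ 2 * t * h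
  | 0, _ => by simp [approxProd]
  | t + 1, ht => by
    have ht' : 2 * t * h ≤ 1 := by push_cast at ht; linarith [nonneg_of_three_le_mul hmh]
    have ih := abs_approxProd_sub_prod_le hmh hx t ht'
    have hY : |approxProd m h x t| ≤ 2 := by
      linarith [abs_prod_le_one hx (range (t + 1)),
        abs_sub_abs_le_abs_sub (approxProd m h x t) (∏ k ∈ range (t + 1), x k)]
    rw [prod_range_succ, show approxProd m h x (t + 1) - (∏ k ∈ range (t + 1), x k) * x (t + 1)
        = (approxMul m h (approxProd m h x t) (x (t + 1)) - approxProd m h x t * x (t + 1))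
          + (approxProd m h x t - ∏ k ∈ range (t + 1), x k) * x (t + 1) by
      rw [approxProd]; ring]
    refine (abs_add_le _ _).trans ?_
    rw [abs_mul]
    have := abs_approxMul_sub_mul_le hmh hY (hx (t + 1))
    have := mul_le_of_le_one_right
      (abs_nonneg (approxProd m h x t - ∏ k ∈ range (t + 1), x k)) (hx (t + 1))
    push_cast
    linarith

lemma abs_approxProd_le_two (hmh : 3 ≤ m * h) (hx : ∀ j, |x j| ≤ 1) {t : ℕ}
    (ht : 2 * t * h ≤ 1) : |approxProd m h x t| ≤ 2 := by
  linarith [abs_approxProd_sub_prod_le hmh hx t ht, abs_prod_le_one hx (range (t + 1)),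
    abs_sub_abs_le_abs_sub (approxProd m h x t) (∏ k ∈ range (t + 1), x k)]

lemma abs_approxProd_sub_approxProd_le (hmh : 3 ≤ m * h) (hx : ∀ j, |x j| ≤ 1)
    (hx' : ∀ j, |x' j| ≤ 1) {δ : ℝ} (hδ : ∀ j, |x j - x' j| ≤ δ) :
    ∀ t : ℕ, 2 * t * h ≤ 1 → |approxProd m h x t - approxProd m h x' t| ≤ (1 + 3 * t) * δ
  | 0, _ => by simpa [approxProd] using hδ 0
  | t + 1, ht => by
    have ht' : 2 * t * h ≤ 1 := by push_cast at ht; linarith [nonneg_of_three_le_mul hmh]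
    have ih := abs_approxProd_sub_approxProd_le hmh hx hx' hδ t ht'
    have hstep := abs_approxMul_sub_approxMul_le hmh (abs_approxProd_le_two hmh hx ht')
      (hx (t + 1)) (abs_approxProd_le_two hmh hx' ht') (hx' (t + 1))
    have hδ0 : 0 ≤ δ := (abs_nonneg _).trans (hδ 0)
    have hh := nonneg_of_three_le_mul hmh
    calc _ ≤ (1 + h / 2) * ((1 + 3 * t) * δ) + (2 + h / 2) * δ :=
          hstep.trans (add_le_add (mul_le_mul_of_nonneg_left ih (by positivity))
            (mul_le_mul_of_nonneg_left (hδ _) (by positivity)))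
      _ ≤ (1 + 3 * (t + 1 : ℕ)) * δ := by
          push_cast at ht ⊢
          nlinarith [mul_nonneg hh hδ0, mul_nonneg (mul_nonneg hh hδ0) t.cast_nonneg]

end ApproxProduct

section Layers

variable (d : ℕ)

def unitRow (i j : ℕ) : ℝ := if j = i then 1 else 0

def splitRow (r : ℕ → ℕ → ℝ) (u j : ℕ) : ℝ := if u < d then r u j else -r (u - d) j

def readRow (i j : ℕ) : ℝ := unitRow i j - unitRow (d + i) j

/-- A layer of width `2 d` stores `V i` (`i < d`) as the pair of neurons `i` and `d + i`,
which `readRow d i` turns back into `V i = max (V i) 0 - max (-V i) 0`. -/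
def splitVal (V : ℕ → ℝ) (u : ℕ) : ℝ := max (if u < d then V u else -V (u - d)) 0

lemma sum_unitRow_mul {n i : ℕ} (hi : i < n) (v : ℕ → ℝ) :
    ∑ j ∈ range n, unitRow i j * v j = v i := by
  simp [unitRow, hi]

lemma sum_readRow_mul {n i : ℕ} (hi : d + i < n) (v : ℕ → ℝ) :
    ∑ j ∈ range n, readRow d i j * v j = v i - v (d + i) := by
  simp only [readRow, sub_mul, sum_sub_distrib, sum_unitRow_mul (by omega : i < n),
    sum_unitRow_mul hi]

lemma sum_readRow_mul_splitVal {n i : ℕ} (hi : i < d) (hn : 2 * d ≤ n) {v V : ℕ → ℝ}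
    (hv : ∀ j < 2 * d, v j = splitVal d V j) : ∑ j ∈ range n, readRow d i j * v j = V i := by
  rw [sum_readRow_mul d (by omega), hv _ (by omega), hv _ (by omega), splitVal, splitVal,
    if_pos hi, if_neg (by omega), Nat.add_sub_cancel_left]
  exact max_zero_sub_max_neg_zero_eq_self _

lemma max_sum_splitRow_mul {r : ℕ → ℕ → ℝ} {s : Finset ℕ} {v V : ℕ → ℝ}
    (hr : ∀ i < d, ∑ j ∈ s, r i j * v j = V i) {u : ℕ} (hu : u < 2 * d) :
    max (∑ j ∈ s, splitRow d r u j * v j) 0 = splitVal d V u := by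
  simp only [splitRow, splitVal]
  split_ifs with h
  · rw [hr u h]
  · rw [← hr (u - d) (by omega), ← sum_neg_distrib]
    simp only [neg_mul]

end Layers

section HatBlock

def hatSign (r : ℕ) : ℝ := if r % 2 = 0 then 1 else -1

def hatMix (r : ℕ) : ℝ := if r % 4 < 2 then 1 else -1

/-- Neuron `4 v + q` (`q < 4`) of a hat block is the term `max (c - v h) 0` of `sqInterp`
at `c = a + b, -(a + b), a - b, -(a - b)` respectively. -/
def hatVal (h a b : ℝ) (r : ℕ) : ℝ := max (hatSign r * (a + hatMix r * b) - (r / 4 : ℕ) * h) 0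

lemma max_sub_add_max_neg_sub (a : ℝ) {c : ℝ} (hc : 0 ≤ c) :
    max (a - c) 0 + max (-a - c) 0 = max (|a| - c) 0 := by
  rcases le_total a 0 with ha | ha
  · rw [abs_of_nonpos ha, max_eq_right (by linarith : a - c ≤ 0), zero_add]
  · rw [abs_of_nonneg ha, max_eq_right (by linarith : -a - c ≤ 0), add_zero]

lemma sum_hatVal (m : ℕ) {h : ℝ} (hh : 0 ≤ h) (a b : ℝ) :
    ∑ r ∈ range (4 * m), hatMix r * sqCoeff h (r / 4) / 4 * hatVal h a b r
      = approxMul m h a b := by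
  induction m with
  | zero => simp [approxMul, sqInterp]
  | succ m ih =>
    have hc : (0 : ℝ) ≤ m * h := by positivity
    rw [show 4 * (m + 1) = 4 * m + 3 + 1 by ring, sum_range_succ, sum_range_succ, sum_range_succ,
      sum_range_succ, ih]
    -- the four hat neurons `4 m + q` add the `m`-th ReLU terms of `sqInterp` at `|a ± b|`
    have hat : ∀ q < 4, hatVal h a b (4 * m + q) = max (hatSign q * (a + hatMix q * b) - m * h) 0 :=
      fun q hq => by
        simp only [hatVal, hatSign, hatMix, show (4 * m + q) / 4 = m by omega,
          show (4 * m + q) % 2 = q % 2 by omega, show (4 * m + q) % 4 = q by omega,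
          show q % 4 = q by omega]
    have coeff : ∀ q < 4,
        hatMix (4 * m + q) * sqCoeff h ((4 * m + q) / 4) = hatMix q * sqCoeff h m := fun q hq => by
        simp only [hatMix, show (4 * m + q) / 4 = m by omega, show (4 * m + q) % 4 = q by omega,
          show q % 4 = q by omega]
    have hat0 := hat 0 (by norm_num)
    have coeff0 := coeff 0 (by norm_num)
    rw [add_zero] at hat0 coeff0
    rw [hat0, coeff0, hat 1 (by norm_num), coeff 1 (by norm_num), hat 2 (by norm_num),
      coeff 2 (by norm_num), hat 3 (by norm_num), coeff 3 (by norm_num)]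
    simp only [approxMul, sqInterp, sum_range_succ, hatMix, hatSign]
    norm_num
    have e₁ := max_sub_add_max_neg_sub (a + b) hc
    have e₂ := max_sub_add_max_neg_sub (a - b) hc
    ring_nf at e₁ e₂ ⊢
    linear_combination (sqCoeff h m / 4) * e₁ - (sqCoeff h m / 4) * e₂

end HatBlock

section Network

variable (d : ℕ) {m : ℕ}

def wideVal (h : ℝ) (V : ℕ → ℝ) (t u : ℕ) : ℝ :=
  if u < 2 * d then splitVal d V u else hatVal h (V t) (V (t + 1)) (u - 2 * d)

def wideRow (t u j : ℕ) : ℝ :=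
  if u < 2 * d then splitRow d (readRow d) u j
  else hatSign (u - 2 * d) * (readRow d t j + hatMix (u - 2 * d) * readRow d (t + 1) j)

def wideBias (h : ℝ) (u : ℕ) : ℝ := if u < 2 * d then 0 else -(((u - 2 * d) / 4 : ℕ) * h)

def hatCoeff (h : ℝ) (j : ℕ) : ℝ :=
  if j < 2 * d then 0 else hatMix (j - 2 * d) * sqCoeff h ((j - 2 * d) / 4) / 4

def narrowRow (h : ℝ) (t : ℕ) : ℕ → ℕ → ℝ :=
  splitRow d fun i j => if i = t + 1 then hatCoeff d h j else readRow d i j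

lemma sum_hatCoeff_mul_wideVal (V : ℕ → ℝ) (t : ℕ) :
    ∑ j ∈ range (2 * d + 4 * m), hatCoeff d (3 / m) j * wideVal d (3 / m) V t j
      = approxMul m (3 / m) (V t) (V (t + 1)) := by
  rw [← sum_hatVal m (by positivity), sum_range_add, sum_eq_zero fun j hj => by
    rw [hatCoeff, if_pos (mem_range.1 hj), zero_mul], zero_add]
  refine sum_congr rfl fun r _ => ?_
  simp only [hatCoeff, wideVal, if_neg (show ¬ 2 * d + r < 2 * d by omega), Nat.add_sub_cancel_left]

def prodWidth (m k : ℕ) : ℕ :=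
  if k = 0 ∨ k = 2 * d then d else if k % 2 = 1 then 2 * d else 2 * d + 4 * m

def prodWeight (m k : ℕ) : ℕ → ℕ → ℝ :=
  if k = 0 then splitRow d unitRow else if k = 2 * d - 1 then readRow d
  else if k % 2 = 1 then wideRow d (k / 2) else narrowRow d (3 / m) (k / 2 - 1)

def prodBias (m k : ℕ) : ℕ → ℝ := if k % 2 = 1 ∧ k ≠ 2 * d - 1 then wideBias d (3 / m) else 0

/-- Layer `2 t + 1` (width `2 d`) stores `partialProd m x t`; layer `2 t + 2` (width
`2 d + 4 m`) adds the `4 m` hat neurons of `approxMul` applied to its entries `t` and `t + 1`,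
which layer `2 t + 3` sums up to obtain `partialProd m x (t + 1)`. -/
def prodNet (m : ℕ) : DNN := DNN.ofFun (2 * d - 1) (prodWidth d m) (prodWeight d m) (prodBias d m)

def partialProd (m : ℕ) (x : ℕ → ℝ) (s u : ℕ) : ℝ :=
  if u ≤ s then approxProd m (3 / m) x u else x u

lemma partialProd_zero (x : ℕ → ℝ) : partialProd m x 0 = x := by
  funext u
  rcases u with _ | u
  · rfl
  · exact if_neg (by omega)

lemma partialProd_succ_of_ne (x : ℕ → ℝ) {t u : ℕ} (hu : u ≠ t + 1) :
    partialProd m x (t + 1) u = partialProd m x t u := by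
  simp only [partialProd]
  split_ifs <;> first | rfl | omega

lemma partialProd_succ_self (x : ℕ → ℝ) (t : ℕ) :
    partialProd m x (t + 1) (t + 1)
      = approxMul m (3 / m) (partialProd m x t t) (partialProd m x t (t + 1)) := by
  simp only [partialProd, le_refl, if_pos, if_neg (show ¬ t + 1 ≤ t by omega)]
  rfl

lemma prodWidth_zero : prodWidth d m 0 = d := if_pos (Or.inl rfl)

lemma prodWidth_odd {k : ℕ} (hk : k % 2 = 1) : prodWidth d m k = 2 * d := by
  rw [prodWidth, if_neg (by omega), if_pos hk]

lemma prodWidth_even {t : ℕ} (ht : t + 2 ≤ d) : prodWidth d m (2 * t + 2) = 2 * d + 4 * m := by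
  rw [prodWidth, if_neg (by omega), if_neg (by omega)]

lemma prodWidth_last (hd : 0 < d) : prodWidth d m (2 * d - 1 + 1) = d :=
  if_pos (Or.inr (by omega))

lemma hidden_succ_prodNet {x : Fin (prodWidth d m 0) → ℝ} {k : ℕ} {g : ℕ → ℝ}
    (hg : ∀ j : Fin (prodWidth d m k), (prodNet d m).hidden k x j = g j)
    (i : Fin (prodWidth d m (k + 1))) :
    (prodNet d m).hidden (k + 1) x i
      = max (∑ j ∈ range (prodWidth d m k), prodWeight d m k i j * g j + prodBias d m k i) 0 :=
  DNN.hidden_succ_ofFun (L := 2 * d - 1) (ℓ := prodWidth d m) (W := prodWeight d m)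
    (b := prodBias d m) hg i

lemma hidden_prodNet_one (x : ℕ → ℝ) (i : Fin (prodWidth d m 1)) :
    (prodNet d m).hidden 1 (fun j => x j) i = splitVal d (partialProd m x 0) i := by
  refine (hidden_succ_prodNet d (g := x) (fun _ => rfl) i).trans ?_
  have hi : i.1 < 2 * d := i.2.trans_eq (prodWidth_odd d rfl)
  rw [partialProd_zero, prodWeight, if_pos rfl, prodBias, if_neg (by omega), prodWidth_zero,
    Pi.zero_apply, add_zero]
  exact max_sum_splitRow_mul d (fun i hi => sum_unitRow_mul hi x) hi

lemma hidden_prodNet_wide (x : ℕ → ℝ) {t : ℕ} (ht : t + 2 ≤ d)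
    (IH : ∀ j : Fin (prodWidth d m (2 * t + 1)),
      (prodNet d m).hidden (2 * t + 1) (fun j => x j) j = splitVal d (partialProd m x t) j)
    (i : Fin (prodWidth d m (2 * t + 2))) :
    (prodNet d m).hidden (2 * t + 2) (fun j => x j) i
      = wideVal d (3 / m) (partialProd m x t) t i := by
  refine (hidden_succ_prodNet d IH i).trans ?_
  have hread : ∀ i < d, ∑ j ∈ range (2 * d), readRow d i j * splitVal d (partialProd m x t) j
      = partialProd m x t i := fun i hi => sum_readRow_mul_splitVal d hi le_rfl fun _ _ => rfl
  rw [prodWeight, if_neg (by omega), if_neg (by omega), if_pos (by omega), prodBias,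
    if_pos (by omega), prodWidth_odd d (by omega), show (2 * t + 1) / 2 = t by omega]
  simp only [wideRow, wideBias, wideVal]
  split_ifs with hi
  · rw [add_zero]
    exact max_sum_splitRow_mul d hread hi
  · simp only [mul_add, add_mul, mul_assoc, sum_add_distrib, ← mul_sum, hread t (by omega),
      hread (t + 1) (by omega), hatVal]
    ring_nf

lemma hidden_prodNet_narrow (x : ℕ → ℝ) {t : ℕ} (ht : t + 2 ≤ d)
    (IH : ∀ j : Fin (prodWidth d m (2 * t + 2)),
      (prodNet d m).hidden (2 * t + 2) (fun j => x j) j = wideVal d (3 / m) (partialProd m x t) t j)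
    (i : Fin (prodWidth d m (2 * t + 3))) :
    (prodNet d m).hidden (2 * t + 3) (fun j => x j) i = splitVal d (partialProd m x (t + 1)) i := by
  refine (hidden_succ_prodNet d IH i).trans ?_
  have hi : i.1 < 2 * d := i.2.trans_eq (prodWidth_odd d (by omega))
  rw [prodWeight, if_neg (by omega), if_neg (by omega), if_neg (by omega), prodBias,
    if_neg (by omega), Pi.zero_apply, add_zero, prodWidth_even d ht,
    show (2 * t + 2) / 2 - 1 = t by omega]
  refine max_sum_splitRow_mul d (fun i' hi' => ?_) hi
  by_cases h : i' = t + 1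
  · simp only [h, if_true]
    rw [sum_hatCoeff_mul_wideVal, partialProd_succ_self]
  · simp only [h, if_false]
    rw [sum_readRow_mul_splitVal d (v := wideVal d (3 / m) (partialProd m x t) t) hi'
      (Nat.le_add_right _ _) fun j hj => if_pos hj,
      partialProd_succ_of_ne x h]

lemma hidden_prodNet_odd (x : ℕ → ℝ) :
    ∀ s < d, ∀ i : Fin (prodWidth d m (2 * s + 1)),
      (prodNet d m).hidden (2 * s + 1) (fun j => x j) i = splitVal d (partialProd m x s) i
  | 0, _ => hidden_prodNet_one d x
  | s + 1, hs => hidden_prodNet_narrow d x (by omega)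
      (hidden_prodNet_wide d x (by omega) (hidden_prodNet_odd x s (by omega)))

lemma realize_prodNet (hd : 0 < d) (x : ℕ → ℝ)
    (i : Fin (prodWidth d m (2 * d - 1 + 1))) :
    (prodNet d m).realize (fun j => x j) i = approxProd m (3 / m) x i := by
  obtain ⟨n, rfl⟩ : ∃ n, d = n + 1 := ⟨d - 1, by omega⟩
  refine (DNN.realize_ofFun (ℓ := prodWidth (n + 1) m) (W := prodWeight (n + 1) m)
    (b := prodBias (n + 1) m) (hidden_prodNet_odd (n + 1) x n (by omega)) i).trans ?_
  have hi : i.1 < n + 1 := i.2.trans_eq (prodWidth_last (n + 1) hd)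
  rw [prodWeight, if_neg (by omega), if_pos (by omega), prodBias, if_neg (by omega), Pi.zero_apply,
    add_zero, prodWidth_odd _ (by omega), sum_readRow_mul_splitVal _ hi le_rfl fun _ _ => rfl,
    partialProd, if_pos (by omega)]

lemma params_prodNet_le (hd : 0 < d) :
    (prodNet d m).params ≤ 2 * d * ((2 * d + 4 * m + 1) * (2 * d + 1)) := by
  have hL : (prodNet d m).L + 1 = 2 * d := by change 2 * d - 1 + 1 = 2 * d; omega
  rw [DNN.params, hL]
  refine (sum_le_card_nsmul _ _ _ fun k _ => ?_).trans_eq (by rw [card_range, smul_eq_mul])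
  change prodWidth d m (k + 1) * (prodWidth d m k + 1) ≤ _
  have : (prodWidth d m (k + 1) ≤ 2 * d + 4 * m ∧ prodWidth d m k ≤ 2 * d)
      ∨ (prodWidth d m (k + 1) ≤ 2 * d ∧ prodWidth d m k ≤ 2 * d + 4 * m) := by
    simp only [prodWidth]; split_ifs <;> omega
  rcases this with ⟨h₁, h₂⟩ | ⟨h₁, h₂⟩ <;> nlinarith

lemma params_prodNet_le_mul (hd : 0 < d) {N : ℕ} (hN : 0 < N) :
    (prodNet d (6 * d ^ 2 * N)).params ≤ 162 * d ^ 4 * N := by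
  refine (params_prodNet_le d hd).trans ?_
  rw [mul_assoc 6]
  have : 1 ≤ d ^ 2 * N := Nat.one_le_iff_ne_zero.2 (by positivity)
  have : d ≤ d ^ 2 * N := by nlinarith
  calc 2 * d * ((2 * d + 4 * (6 * (d ^ 2 * N)) + 1) * (2 * d + 1))
      ≤ 2 * d * ((27 * (d ^ 2 * N)) * (3 * d)) := by gcongr <;> omega
    _ = 162 * d ^ 4 * N := by ring

end Network

def zeroExtend {d : ℕ} (x : Fin d → ℝ) (u : ℕ) : ℝ := if hu : u < d then x ⟨u, hu⟩ else 0

section ZeroExtend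

variable {d : ℕ}

lemma zeroExtend_val (x : Fin d → ℝ) (i : Fin d) : zeroExtend x i = x i := dif_pos i.2

lemma prod_Iic_eq_prod_range_zeroExtend (x : Fin d → ℝ) (i : Fin d) :
    ∏ j ∈ Iic i, x j = ∏ k ∈ range (i + 1), zeroExtend x k := by
  rw [Nat.range_succ_eq_Iic, ← Fin.map_valEmbedding_Iic, prod_map]
  simp [zeroExtend_val]

lemma abs_zeroExtend_le_one {x : Fin d → ℝ} (hx : x ∈ cube d (-1) 1) (u : ℕ) :
    |zeroExtend x u| ≤ 1 := by
  unfold zeroExtend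
  split_ifs with hu
  · exact abs_le.2 ⟨hx.1 ⟨u, hu⟩, hx.2 ⟨u, hu⟩⟩
  · simp

lemma abs_zeroExtend_sub_le {p : ℝ≥0∞} (hp : 1 ≤ p) (x y : Fin d → ℝ) (u : ℕ) :
    |zeroExtend x u - zeroExtend y u| ≤ lpNorm p (x - y) := by
  unfold zeroExtend
  split_ifs with hu
  · exact abs_le_lpNorm hp (x - y) ⟨u, hu⟩
  · simpa using lpNorm_nonneg p (x - y)

end ZeroExtend

def prodNetFun (d m : ℕ) (x : Fin d → ℝ) (i : Fin d) : ℝ := approxProd m (3 / m) (zeroExtend x) i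

section ProdNetFun

variable {d m : ℕ}

lemma prodNet_realizes (hd : 0 < d) : (prodNet d m).Realizes (prodNetFun d m) := by
  refine ⟨prodWidth_zero d (m := m), prodWidth_last d hd, fun x i => ?_⟩
  have := realize_prodNet d (m := m) hd (zeroExtend x) (Fin.cast (prodWidth_last d hd).symm i)
  refine this.symm.trans ?_
  congr 1
  funext j
  exact zeroExtend_val x (Fin.cast _ j)

lemma two_mul_mul_three_div_le_one (hm : 6 * d ≤ m) {t : ℕ} (ht : t < d) :
    2 * t * (3 / m : ℝ) ≤ 1 := by
  have : (6 * t : ℝ) + 1 ≤ m := by exact_mod_cast (by omega : 6 * t + 1 ≤ m)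
  rw [mul_div_assoc', div_le_one (by linarith)]; linarith

lemma lpNorm_prodNetFun_sub_le (hd : 0 < d) {p : ℝ≥0∞} (hp : 1 ≤ p) (hm : 6 * d ≤ m)
    {x : Fin d → ℝ} (hx : x ∈ cube d (-1) 1) :
    lpNorm p (prodNetFun d m x - fun i => ∏ j ∈ Iic i, x j) ≤ 6 * d ^ 2 / m := by
  have hm0 : (0 : ℝ) < m := by exact_mod_cast (by omega : 0 < m)
  refine (lpNorm_le_card_mul hp hd (C := 6 * d / m) _ fun i => ?_).trans_eq (by ring)
  rw [Pi.sub_apply, prodNetFun, prod_Iic_eq_prod_range_zeroExtend]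
  refine (abs_approxProd_sub_prod_le (mul_div_cancel₀ 3 hm0.ne').ge
    (abs_zeroExtend_le_one hx) i (two_mul_mul_three_div_le_one hm i.2)).trans ?_
  have : (i : ℝ) ≤ d := by exact_mod_cast i.2.le
  rw [mul_div_assoc', div_le_div_iff_of_pos_right hm0]
  linarith

lemma lpNorm_prodNetFun_sub_prodNetFun_le (hd : 0 < d) {p : ℝ≥0∞} (hp : 1 ≤ p)
    (hm : 6 * d ≤ m) {x y : Fin d → ℝ} (hx : x ∈ cube d (-1) 1) (hy : y ∈ cube d (-1) 1) :
    lpNorm p (prodNetFun d m x - prodNetFun d m y) ≤ 3 * d ^ 2 * lpNorm p (x - y) := by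
  have hm0 : (0 : ℝ) < m := by exact_mod_cast (by omega : 0 < m)
  refine (lpNorm_le_card_mul hp hd (C := 3 * d * lpNorm p (x - y)) _ fun i => ?_).trans_eq
    (by ring)
  refine (abs_approxProd_sub_approxProd_le (mul_div_cancel₀ 3 hm0.ne').ge
    (abs_zeroExtend_le_one hx) (abs_zeroExtend_le_one hy) (abs_zeroExtend_sub_le hp x y) i
    (two_mul_mul_three_div_le_one hm i.2)).trans ?_
  have : (1 + 3 * i : ℝ) ≤ 3 * d := by exact_mod_cast (by omega : 1 + 3 * i.1 ≤ 3 * d)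
  gcongr
  exact lpNorm_nonneg p _

lemma params_prodNet_ceil_le (hd : 0 < d) {ε : ℝ} (hε : 0 < ε) (hε1 : ε ≤ 1) :
    ((prodNet d (6 * d ^ 2 * ⌈ε⁻¹⌉₊)).params : ℝ) ≤ 324 * d ^ 324 * ε⁻¹ := by
  have hN : (⌈ε⁻¹⌉₊ : ℝ) ≤ 2 * ε⁻¹ := by
    linarith [Nat.ceil_lt_add_one (inv_nonneg.2 hε.le), (one_le_inv₀ hε).2 hε1]
  have hd1 : (1 : ℝ) ≤ d := by exact_mod_cast hd
  calc ((prodNet d (6 * d ^ 2 * ⌈ε⁻¹⌉₊)).params : ℝ) ≤ 162 * d ^ 4 * ⌈ε⁻¹⌉₊ := by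
        exact_mod_cast params_prodNet_le_mul d hd (Nat.one_le_ceil_iff.2 (by positivity))
    -- `K` is both the constant and the exponent, so `d ^ 4` is weakened to `d ^ 324`
    _ ≤ 162 * d ^ 324 * (2 * ε⁻¹) := by gcongr; norm_num
    _ = 324 * d ^ 324 * ε⁻¹ := by ring

end ProdNetFun

lemma three_mul_sq_le_sqrt_mul_rpow {d : ℕ} (hd : 0 < d) :
    (3 * d ^ 2 : ℝ) ≤ √32 * d ^ ((7 : ℝ) / 2) := by
  have hd1 : (1 : ℝ) ≤ d := by exact_mod_cast hd
  have : (d : ℝ) ^ (2 : ℝ) ≤ d ^ ((7 : ℝ) / 2) := Real.rpow_le_rpow_of_exponent_le hd1 (by norm_num)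
  have : (3 : ℝ) ≤ √32 := Real.le_sqrt_of_sq_le (by norm_num)
  rw [← Real.rpow_natCast]
  push_cast
  gcongr

/-- **Lemma 3.8**: approximation of the extended product function
`𝔭_d(x) = (x_1, x_1x_2, …, x_1⋯x_d)` on `[-1,1]^d` with Lipschitz constant `√32 d^{7/2}`
at cost `≤ K d^K ε⁻¹`. -/
theorem extended_product_approx :
    ∃ K : ℕ, 0 < K ∧
      ∀ d : ℕ, 0 < d → ∀ p : ℝ≥0∞, 1 ≤ p → ∀ ε : ℝ, 0 < ε → ε ≤ 1 →
        Cost p (cube d (-1) 1) (fun x (i : Fin d) => ∏ j ∈ Finset.Iic i, x j)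
            (Real.sqrt 32 * (d : ℝ) ^ ((7 : ℝ) / 2)) ε ≤
          ENNReal.ofReal ((K : ℝ) * (d : ℝ) ^ K * ε⁻¹) := by
  refine ⟨324, by norm_num, fun d hd p hp ε hε hε1 => ?_⟩
  set N := ⌈ε⁻¹⌉₊
  have hN : 0 < N := Nat.one_le_ceil_iff.2 (by positivity)
  have hm : 6 * d ≤ 6 * d ^ 2 * N := by nlinarith
  have herr : (6 * d ^ 2 / (6 * d ^ 2 * N : ℕ) : ℝ) ≤ ε := by
    push_cast
    rw [div_mul_cancel_left₀ (by positivity)]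
    exact inv_le_of_inv_le₀ hε (Nat.le_ceil _)
  calc Cost p (cube d (-1) 1) (fun x (i : Fin d) => ∏ j ∈ Finset.Iic i, x j)
        (√32 * (d : ℝ) ^ ((7 : ℝ) / 2)) ε
      ≤ (prodNet d (6 * d ^ 2 * N)).params :=
        cost_le_params (prodNet_realizes hd)
          (fun x hx => (lpNorm_prodNetFun_sub_le hd hp hm hx).trans herr)
          (fun x hx y hy => (lpNorm_prodNetFun_sub_prodNetFun_le hd hp hm hx hy).trans
            (mul_le_mul_of_nonneg_right (three_mul_sq_le_sqrt_mul_rpow hd) (lpNorm_nonneg p _)))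
    _ ≤ _ := by
      rw [← ENNReal.ofReal_natCast]
      exact ENNReal.ofReal_le_ofReal (by exact_mod_cast params_prodNet_ceil_le hd hε hε1)
end
end

section
/- Lemma 3.11 (approximation of the maximum function with Lipschitz constant 1): There exists a constant K ∈ ℕ which satisfies for all d ∈ ℕ, every d-dimensional hypercube Q ⊆ ℝ^d, and all ε ∈ [0,∞), p ∈ [1,∞] that Cost_p(m_d|_Q, 1, ε) ≤ K·d². -/
open scoped BigOperators ENNReal

noncomputable section

/-!
On the cube the values `x i - a` are nonnegative, and for `B ≥ 0` we have
`max A B = relu (A - B) + relu B`. Encoding each value as the sum of two adjacent neurons, one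
ReLU layer therefore merges pairs of values into their maxima (the sums are formed by the next
affine layer), and a tournament tree of such layers, of widths `2 ⌈d / 2 ^ k⌉`, computes
`max x - a` exactly. The widths sum to `O(d)` and each is at most `2 d`, whence `O(d²)`
parameters. The maximum is `1`-Lipschitz for every `ℓ^p`-norm, so even `ε = 0` is attained.
-/

open Finset

section LpNorm

variable {p : ℝ≥0∞} {k : ℕ}

lemma lpNorm_eq_norm_toLp (hp : 1 ≤ p) (x : Fin k → ℝ) :
    lpNorm p x = ‖WithLp.toLp p x‖ := by
  unfold lpNorm
  split_ifs with h
  · subst h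
    simp [PiLp.norm_eq_ciSup]
  · have hp0 : 0 < p.toReal := ENNReal.toReal_pos (by positivity) h
    simp [PiLp.norm_eq_sum hp0]

lemma lpNorm_zero (hp : 1 ≤ p) : lpNorm p (0 : Fin k → ℝ) = 0 := by
  have : Fact (1 ≤ p) := ⟨hp⟩
  rw [lpNorm_eq_norm_toLp hp, WithLp.toLp_zero, norm_zero]

lemma abs_apply_le_lpNorm (hp : 1 ≤ p) (x : Fin k → ℝ) (i : Fin k) : |x i| ≤ lpNorm p x := by
  have : Fact (1 ≤ p) := ⟨hp⟩
  simpa [lpNorm_eq_norm_toLp hp] using PiLp.norm_apply_le (WithLp.toLp p x) i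

lemma lpNorm_const_fin_one (hp : 1 ≤ p) (c : ℝ) : lpNorm p (fun _ : Fin 1 => c) = |c| := by
  have : Fact (1 ≤ p) := ⟨hp⟩
  rw [lpNorm_eq_norm_toLp hp]
  exact (PiLp.norm_toLp_const' (ι := Fin 1) (p := p) c).trans (by simp)

lemma abs_iSup_sub_iSup_le_lpNorm [NeZero k] (hp : 1 ≤ p) (x y : Fin k → ℝ) :
    |(⨆ i, x i) - ⨆ i, y i| ≤ lpNorm p (x - y) := by
  have hxy := fun i => abs_sub_le_iff.1 (abs_apply_le_lpNorm hp (x - y) i)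
  rw [abs_sub_le_iff, sub_le_iff_le_add, sub_le_iff_le_add]
  constructor
  · exact ciSup_le fun i => by
      linarith [(hxy i).1, le_ciSup (Finite.bddAbove_range y) i]
  · exact ciSup_le fun i => by
      linarith [(hxy i).2, le_ciSup (Finite.bddAbove_range x) i]

end LpNorm

lemma DNN.realizes_realize (Φ : DNN) {m n : ℕ} (hm : Φ.ℓ 0 = m) (hn : Φ.ℓ (Φ.L + 1) = n) :
    Φ.Realizes fun x i => Φ.realize (fun j => x (Fin.cast hm j)) (Fin.cast hn.symm i) :=
  ⟨hm, hn, fun _ _ => rfl⟩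

lemma cost_le_params_of_eqOn {p : ℝ≥0∞} (hp : 1 ≤ p) {m n : ℕ} {D : Set (Fin m → ℝ)}
    {f g : (Fin m → ℝ) → (Fin n → ℝ)} {L ε : ℝ} {Φ : DNN} (hΦ : Φ.Realizes g)
    (hgf : Set.EqOn g f D) (hε : 0 ≤ ε)
    (hf : ∀ x ∈ D, ∀ y ∈ D, lpNorm p (f x - f y) ≤ L * lpNorm p (x - y)) :
    Cost p D f L ε ≤ Φ.params :=
  sInf_le ⟨Φ, g, hΦ, rfl, fun x hx => by rwa [hgf hx, sub_self, lpNorm_zero hp],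
    fun x hx y hy => by simpa only [hgf hx, hgf hy] using hf x hx y hy⟩

section TournamentMax

def pairwiseMax (v : ℕ → ℝ) (j : ℕ) : ℝ := max (v (2 * j)) (v (2 * j + 1))

lemma le_pairwiseMax_div_two (v : ℕ → ℝ) (t : ℕ) : v t ≤ pairwiseMax v (t / 2) := by
  rcases Nat.even_or_odd' t with ⟨q, rfl | rfl⟩
  · simp [pairwiseMax]
  · rw [show (2 * q + 1) / 2 = q by omega]
    exact le_max_right _ _

lemma le_iterate_pairwiseMax (v : ℕ → ℝ) (k t : ℕ) :
    v t ≤ pairwiseMax^[k] v (t / 2 ^ k) := by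
  induction k with
  | zero => simp
  | succ k ih =>
    rw [Function.iterate_succ_apply', pow_succ, ← Nat.div_div_eq_div_mul]
    exact ih.trans (le_pairwiseMax_div_two _ _)

lemma iterate_pairwiseMax_le {v : ℕ → ℝ} {M : ℝ} (h : ∀ t, v t ≤ M) (k j : ℕ) :
    pairwiseMax^[k] v j ≤ M := by
  induction k generalizing j with
  | zero => exact h j
  | succ k ih =>
    rw [Function.iterate_succ_apply']
    exact max_le (ih _) (ih _)

def zeroExt {n : ℕ} (u : Fin n → ℝ) (t : ℕ) : ℝ := if h : t < n then u ⟨t, h⟩ else 0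

lemma zeroExt_val {n : ℕ} (u : Fin n → ℝ) (i : Fin n) : zeroExt u i = u i := dif_pos i.2

lemma zeroExt_of_le {n t : ℕ} (u : Fin n → ℝ) (h : n ≤ t) : zeroExt u t = 0 :=
  dif_neg (by omega)

lemma zeroExt_nonneg {n : ℕ} {u : Fin n → ℝ} (hu : 0 ≤ u) (t : ℕ) : 0 ≤ zeroExt u t := by
  unfold zeroExt
  split_ifs
  exacts [hu _, le_rfl]

lemma iterate_pairwiseMax_zeroExt {n k : ℕ} (hn : n ≤ 2 ^ k) {x : Fin n → ℝ} (hx : 0 ≤ x) :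
    pairwiseMax^[k] (zeroExt x) 0 = ⨆ i, x i := by
  have hbdd : ∀ i, x i ≤ pairwiseMax^[k] (zeroExt x) 0 := fun i => by
    simpa [zeroExt_val, Nat.div_eq_of_lt (i.2.trans_le hn)] using
      le_iterate_pairwiseMax (zeroExt x) k i
  refine le_antisymm (iterate_pairwiseMax_le (fun t => ?_) k 0) (Real.iSup_le hbdd ?_)
  · by_cases ht : t < n
    · exact (zeroExt_val x ⟨t, ht⟩).trans_le (le_ciSup (Finite.bddAbove_range x) _)
    · exact (zeroExt_of_le x (not_lt.1 ht)).trans_le (Real.iSup_nonneg hx)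
  · simpa using (zeroExt_nonneg hx 0).trans (le_iterate_pairwiseMax (zeroExt x) k 0)

end TournamentMax

section MaxNet

def pairSum {n : ℕ} (u : Fin n → ℝ) (j : ℕ) : ℝ := zeroExt u (2 * j) + zeroExt u (2 * j + 1)

lemma pairSum_nonneg {n : ℕ} {u : Fin n → ℝ} (hu : 0 ≤ u) (j : ℕ) : 0 ≤ pairSum u j :=
  add_nonneg (zeroExt_nonneg hu _) (zeroExt_nonneg hu _)

lemma pairSum_of_le {n j : ℕ} (u : Fin n → ℝ) (h : n ≤ 2 * j) : pairSum u j = 0 := by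
  simp [pairSum, zeroExt_of_le u h, zeroExt_of_le u (h.trans (Nat.le_succ _))]

lemma sum_ite_mul_eq_sum_zeroExt {n : ℕ} {P : ℕ → Prop} [DecidablePred P] {s : Finset ℕ}
    (hs : ∀ t, P t ↔ t ∈ s) (u : Fin n → ℝ) :
    ∑ j : Fin n, (if P j then 1 else 0) * u j = ∑ t ∈ s, zeroExt u t := by
  calc ∑ j : Fin n, (if P j then 1 else 0) * u j
        = ∑ t ∈ range n, if t ∈ s then zeroExt u t else 0 := by
          rw [← Fin.sum_univ_eq_sum_range]
          simp [hs, zeroExt_val]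
    _ = ∑ t ∈ range n ∩ s, zeroExt u t := sum_ite_mem _ _ _
    _ = ∑ t ∈ s, zeroExt u t :=
          sum_subset inter_subset_right fun t _ ht => zeroExt_of_le u (by simp_all)

def pairWeight (q t : ℕ) : ℝ := if t / 2 = q then 1 else 0

lemma sum_pairWeight_mul {n : ℕ} (u : Fin n → ℝ) (q : ℕ) :
    ∑ j : Fin n, pairWeight q j * u j = pairSum u q := by
  rw [pairSum, ← sum_pair (show 2 * q ≠ 2 * q + 1 by omega)]
  exact sum_ite_mul_eq_sum_zeroExt (P := fun t => t / 2 = q)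
    (fun t => by simp only [mem_insert, mem_singleton]; omega) u

def embedWeight (i t : ℕ) : ℝ := if i = 2 * t then 1 else 0

lemma sum_embedWeight_two_mul_mul {n : ℕ} (u : Fin n → ℝ) (q : ℕ) :
    ∑ j : Fin n, embedWeight (2 * q) j * u j = zeroExt u q := by
  rw [← sum_singleton (zeroExt u) q]
  exact sum_ite_mul_eq_sum_zeroExt (P := fun t => 2 * q = 2 * t)
    (fun t => by simp only [mem_singleton]; omega) u

lemma sum_embedWeight_two_mul_add_one_mul {n : ℕ} (u : Fin n → ℝ) (q : ℕ) :
    ∑ j : Fin n, embedWeight (2 * q + 1) j * u j = 0 := by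
  rw [← sum_empty (f := zeroExt u)]
  exact sum_ite_mul_eq_sum_zeroExt (P := fun t => 2 * q + 1 = 2 * t)
    (fun t => by simp only [notMem_empty, iff_false]; omega) u

/-- Layer `0` puts `x t - a` on neuron `2 t` and `0` on neuron `2 t + 1`. Afterwards a hidden
vector `u` encodes the values `pairSum u j`; a hidden layer `k ≤ d` maps `A = pairSum u (2 j)` and
`B = pairSum u (2 j + 1)` to the neurons `relu (A - B)` and `relu B` at `2 j` and `2 j + 1`,
and the output layer returns `pairSum u 0 + a`. -/
def layerWeight (d k i t : ℕ) : ℝ :=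
  if k = 0 then embedWeight i t
  else if k ≤ d then pairWeight i t - (if i % 2 = 0 then pairWeight (i + 1) t else 0)
  else pairWeight 0 t

def layerBias (d : ℕ) (a : ℝ) (k i : ℕ) : ℝ :=
  if k = 0 then (if i % 2 = 0 then -a else 0) else if k ≤ d then 0 else a

/-- `⌈d / 2 ^ k⌉` for `d ≥ 1`. -/
def width (d k : ℕ) : ℕ := (d - 1) / 2 ^ k + 1

def maxNet (d : ℕ) (a : ℝ) : DNN where
  L := d + 1
  ℓ
    | 0 => d
    | k + 1 => if k ≤ d then 2 * width d k else 1
  W k := Matrix.of fun i j => layerWeight d k i j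
  b k i := layerBias d a k i

lemma width_zero {d : ℕ} (hd : 0 < d) : width d 0 = d := by
  simp only [width, pow_zero, Nat.div_one]
  omega

lemma width_self (d : ℕ) : width d d = 1 := by
  rw [width, Nat.div_eq_of_lt ((Nat.sub_le d 1).trans_lt Nat.lt_two_pow_self)]

lemma width_le {d : ℕ} (hd : 0 < d) (k : ℕ) : width d k ≤ d := by
  have := Nat.div_le_self (d - 1) (2 ^ k)
  rw [width]
  omega

lemma width_le_two_mul_width_succ (d k : ℕ) : width d k ≤ 2 * width d (k + 1) := by
  unfold width
  rw [pow_succ, ← Nat.div_div_eq_div_mul]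
  omega

variable {d : ℕ} {a : ℝ}

lemma maxNet_ℓ_succ {k : ℕ} (hk : k ≤ d) : (maxNet d a).ℓ (k + 1) = 2 * width d k := if_pos hk

lemma maxNet_ℓ_output : (maxNet d a).ℓ (d + 2) = 1 := if_neg (by omega)

lemma maxNet_ℓ_one (hd : 0 < d) : (maxNet d a).ℓ 1 = 2 * d := by
  rw [maxNet_ℓ_succ (Nat.zero_le d), width_zero hd]

lemma zeroExt_maxNet_hidden_succ (x : Fin d → ℝ) (k i : ℕ) :
    zeroExt ((maxNet d a).hidden (k + 1) x) i =
      if i < (maxNet d a).ℓ (k + 1) then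
        max (∑ j : Fin ((maxNet d a).ℓ k), layerWeight d k i j * (maxNet d a).hidden k x j +
          layerBias d a k i) 0
      else 0 := by
  unfold zeroExt
  split_ifs <;> rfl

lemma zeroExt_maxNet_hidden_zero (x : Fin d → ℝ) (t : ℕ) :
    zeroExt ((maxNet d a).hidden 0 x) t = zeroExt x t := rfl

lemma pairSum_maxNet_hidden_one (hd : 0 < d) {x : Fin d → ℝ} (hx : ∀ i, a ≤ x i) :
    pairSum ((maxNet d a).hidden 1 x) = zeroExt (fun i => x i - a) := by
  funext q
  have hodd : (2 * q + 1) % 2 = 1 := by omega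
  simp only [pairSum, zeroExt_maxNet_hidden_succ, layerWeight, layerBias, maxNet_ℓ_one hd,
    ↓reduceIte, Nat.mul_mod_right, hodd, one_ne_zero, sum_embedWeight_two_mul_mul,
    sum_embedWeight_two_mul_add_one_mul]
  rw [zeroExt_maxNet_hidden_zero]
  by_cases hq : q < d
  · have hxq : zeroExt x q = x ⟨q, hq⟩ := zeroExt_val x ⟨q, hq⟩
    have hxaq : zeroExt (fun i => x i - a) q = x ⟨q, hq⟩ - a := zeroExt_val _ ⟨q, hq⟩
    rw [if_pos (by omega), if_pos (by omega), hxq, hxaq, ← sub_eq_add_neg,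
      max_eq_left (sub_nonneg.2 (hx _))]
    simp
  · simp [zeroExt, hq, show ¬ 2 * q + 1 < 2 * d by omega]

lemma pairSum_maxNet_hidden_succ {k : ℕ} (hk : 1 ≤ k) (hkd : k ≤ d) (x : Fin d → ℝ) :
    pairSum ((maxNet d a).hidden (k + 1) x) =
      pairwiseMax (pairSum ((maxNet d a).hidden k x)) := by
  obtain ⟨k, rfl⟩ : ∃ k', k = k' + 1 := ⟨k - 1, by omega⟩
  set u := (maxNet d a).hidden (k + 1) x
  have hu : 0 ≤ u := fun i => le_max_right _ _
  have hn : (maxNet d a).ℓ (k + 1) ≤ 4 * width d (k + 1) := by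
    rw [maxNet_ℓ_succ (by omega)]
    linarith [width_le_two_mul_width_succ d k]
  have hm : (maxNet d a).ℓ (k + 1 + 1) = 2 * width d (k + 1) := maxNet_ℓ_succ hkd
  funext j
  have hodd : (2 * j + 1) % 2 = 1 := by omega
  rw [pairSum, zeroExt_maxNet_hidden_succ, zeroExt_maxNet_hidden_succ]
  simp only [layerWeight, layerBias, hm, if_neg (Nat.succ_ne_zero k), if_pos hkd,
    Nat.mul_mod_right, hodd, ↓reduceIte, one_ne_zero, sub_mul, sum_sub_distrib,
    sum_pairWeight_mul, sub_zero, add_zero, pairwiseMax]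
  by_cases hj : j < width d (k + 1)
  · rw [if_pos (by omega), if_pos (by omega), max_eq_left (pairSum_nonneg hu _),
      ← max_add_add_right, sub_add_cancel, zero_add]
  · rw [if_neg (by omega), if_neg (by omega), pairSum_of_le u (by omega),
      pairSum_of_le u (by omega), max_self, add_zero]

lemma maxNet_realize (x : Fin d → ℝ) (i : Fin ((maxNet d a).ℓ (d + 2))) :
    (maxNet d a).realize x i = pairSum ((maxNet d a).hidden (d + 1) x) 0 + a := by
  change ∑ j : Fin ((maxNet d a).ℓ (d + 1)), layerWeight d (d + 1) i j *
      (maxNet d a).hidden (d + 1) x j + layerBias d a (d + 1) i = _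
  simp only [layerWeight, layerBias, if_neg (Nat.succ_ne_zero d), if_neg (Nat.not_succ_le_self d),
    sum_pairWeight_mul]

lemma pairSum_maxNet_hidden (hd : 0 < d) {x : Fin d → ℝ} (hx : ∀ i, a ≤ x i) {k : ℕ}
    (hk : k ≤ d) :
    pairSum ((maxNet d a).hidden (k + 1) x) = pairwiseMax^[k] (zeroExt fun i => x i - a) := by
  induction k with
  | zero => exact pairSum_maxNet_hidden_one hd hx
  | succ k ih =>
    rw [pairSum_maxNet_hidden_succ (by omega) hk, ih (by omega), Function.iterate_succ_apply']

theorem maxNet_realize_eq_iSup (hd : 0 < d) {x : Fin d → ℝ} (hx : ∀ i, a ≤ x i)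
    (i : Fin ((maxNet d a).ℓ (d + 2))) : (maxNet d a).realize x i = ⨆ j, x j := by
  have : Nonempty (Fin d) := ⟨⟨0, hd⟩⟩
  rw [maxNet_realize, pairSum_maxNet_hidden hd hx le_rfl,
    iterate_pairwiseMax_zeroExt Nat.lt_two_pow_self.le fun j => sub_nonneg.2 (hx j),
    ← ciSup_sub (Finite.bddAbove_range x), sub_add_cancel]

lemma sum_range_div_two_pow_succ_le (N m : ℕ) : ∑ k ∈ range N, m / 2 ^ (k + 1) ≤ m := by
  induction N generalizing m with
  | zero => simp
  | succ N ih =>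
    have hshift : ∀ k, m / 2 ^ (k + 1 + 1) = m / 2 / 2 ^ (k + 1) := fun k => by
      rw [Nat.div_div_eq_div_mul, pow_succ' 2 (k + 1)]
    rw [sum_range_succ']
    simp only [hshift, zero_add, pow_one]
    have := ih (m / 2)
    omega

lemma sum_range_width_succ_le (d N : ℕ) : ∑ k ∈ range N, width d (k + 1) ≤ d + N := by
  have := sum_range_div_two_pow_succ_le N (d - 1)
  simp only [width, sum_add_distrib, sum_const, card_range, smul_eq_mul, mul_one]
  omega

theorem maxNet_params_le (hd : 0 < d) : (maxNet d a).params ≤ 19 * d ^ 2 := by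
  have hhidden : ∑ k ∈ range d, (maxNet d a).ℓ (k + 1 + 1) * ((maxNet d a).ℓ (k + 1) + 1)
      ≤ 6 * d * (2 * d) :=
    calc _ ≤ ∑ k ∈ range d, 6 * d * width d (k + 1) := sum_le_sum fun k hk => by
            have hk : k < d := mem_range.1 hk
            rw [maxNet_ℓ_succ hk, maxNet_ℓ_succ hk.le]
            nlinarith [width_le hd k]
      _ ≤ 6 * d * (2 * d) := by
            rw [← mul_sum]
            exact Nat.mul_le_mul_left _ ((sum_range_width_succ_le d d).trans_eq (two_mul d).symm)
  have houtput : (maxNet d a).ℓ (d + 2) * ((maxNet d a).ℓ (d + 1) + 1) = 3 := by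
    rw [maxNet_ℓ_output, maxNet_ℓ_succ le_rfl, width_self]
  rw [DNN.params, show (maxNet d a).L = d + 1 from rfl, sum_range_succ, sum_range_succ',
    houtput, maxNet_ℓ_one hd]
  change _ + 2 * d * (d + 1) + 3 ≤ _
  nlinarith

end MaxNet

/-- **Lemma 3.11**: the maximum function `m_d(x) = max{x_1, …, x_d}` on any hypercube
`Q = [a,b]^d` can be approximated with Lipschitz constant `1` at cost `≤ K d²`,
for every `ε ∈ [0,∞)`. -/
theorem max_approx :
    ∃ K : ℕ, 0 < K ∧
      ∀ d : ℕ, 0 < d → ∀ (a b : ℝ), a < b → ∀ ε : ℝ, 0 ≤ ε → ∀ p : ℝ≥0∞, 1 ≤ p →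
        Cost p (cube d a b) (fun x (_ : Fin 1) => ⨆ i, x i) 1 ε ≤
          ENNReal.ofReal ((K : ℝ) * (d : ℝ) ^ 2) := by
  refine ⟨19, by norm_num, fun d hd a b _ ε hε p hp => ?_⟩
  have : NeZero d := ⟨hd.ne'⟩
  have hmax : Set.EqOn (fun x i => (maxNet d a).realize x (Fin.cast maxNet_ℓ_output.symm i))
      (fun x (_ : Fin 1) => ⨆ i, x i) (cube d a b) := fun x hx =>
    funext fun i => maxNet_realize_eq_iSup hd (fun j => hx.1 j) _
  have hlip (x y : Fin d → ℝ) : lpNorm p ((fun _ : Fin 1 => ⨆ i, x i) - fun _ => ⨆ i, y i) ≤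
      1 * lpNorm p (x - y) :=
    (lpNorm_const_fin_one hp _).trans_le ((abs_iSup_sub_iSup_le_lpNorm hp x y).trans_eq
      (one_mul _).symm)
  calc Cost p (cube d a b) (fun x (_ : Fin 1) => ⨆ i, x i) 1 ε
      ≤ (maxNet d a).params := cost_le_params_of_eqOn hp
        (DNN.realizes_realize (maxNet d a) (m := d) rfl maxNet_ℓ_output) hmax hε
        fun x _ y _ => hlip x y
    _ ≤ ((19 * d ^ 2 : ℕ) : ℝ≥0∞) := by exact_mod_cast maxNet_params_le hd
    _ = ENNReal.ofReal ((19 : ℕ) * (d : ℝ) ^ 2) := by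
      rw [← ENNReal.ofReal_natCast]
      push_cast
      rfl

end
end
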